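/- arXiv:1702.01634 — 5 statements merged into one kernel-verified Lean document; each statement's English description precedes it below -/
import Mathlib

section
/- Let ρ and σ be density matrices on M_n(ℂ) with ρ ⊑ σ in the QPE order. Then ρ⁺ ≤ σ⁺, and if moreover ρ⁺ = σ⁺ then ρ = σ. -/
open Matrix
open scoped ComplexOrder

/-- The largest eigenvalue of a matrix (for a positive semidefinite matrix this
equals the operator norm). -/
noncomputable def maxEig {m : Type*} [Fintype m] (A : Matrix m m ℂ) : ℝ :=
  sSup {a : ℝ | ∃ v : m → ℂ, v ≠ 0 ∧ A.mulVec v = (a : ℂ) • v}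

/-- A density matrix: positive semidefinite with trace 1. -/
def IsDensity {m : Type*} [Fintype m] (ρ : Matrix m m ℂ) : Prop :=
  ρ.PosSemidef ∧ ρ.trace = 1

/-- The quantum positive evidence (QPE) order: ρ ⊑ σ iff σ⁺•ρ - ρ⁺•σ ≥ 0. -/
def QPE {m : Type*} [Fintype m] (ρ σ : Matrix m m ℂ) : Prop :=
  (maxEig σ • ρ - maxEig ρ • σ).PosSemidef

/-!
Both density matrices have trace one, so the trace of the positive semidefinite matrix
`σ⁺ • ρ - ρ⁺ • σ` is `σ⁺ - ρ⁺ ≥ 0`. If `ρ⁺ = σ⁺`, that matrix has trace zero and so vanishes,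
i.e. `σ⁺ • (ρ - σ) = 0`; and `σ⁺ > 0` because the eigenvalues of `σ` sum to one.
-/

variable {m : Type*} [Fintype m]

section Spectrum

variable [DecidableEq m]

theorem Matrix.setOf_real_eigenvalue_eq_spectrum (A : Matrix m m ℂ) :
    {a : ℝ | ∃ v : m → ℂ, v ≠ 0 ∧ A *ᵥ v = (a : ℂ) • v} = spectrum ℝ A := by
  ext a
  rw [Set.mem_ofPred_eq, ← spectrum.algebraMap_mem_iff ℂ, ← spectrum_toLin',
    ← Module.End.hasEigenvalue_iff_mem_spectrum, Module.End.hasEigenvalue_iff,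
    Submodule.ne_bot_iff]
  simp only [Module.End.mem_eigenspace_iff, toLin'_apply, Complex.coe_algebraMap]
  exact ⟨fun ⟨v, hv, h⟩ => ⟨v, h, hv⟩, fun ⟨v, h, hv⟩ => ⟨v, hv, h⟩⟩

theorem maxEig_eq_sSup_spectrum (A : Matrix m m ℂ) : maxEig A = sSup (spectrum ℝ A) :=
  congrArg sSup A.setOf_real_eigenvalue_eq_spectrum

theorem Matrix.IsHermitian.eigenvalues_le_maxEig {A : Matrix m m ℂ} (hA : A.IsHermitian)
    (i : m) : hA.eigenvalues i ≤ maxEig A := by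
  rw [maxEig_eq_sSup_spectrum]
  exact le_csSup A.finite_real_spectrum.bddAbove (hA.eigenvalues_mem_spectrum_real i)

theorem Matrix.IsHermitian.maxEig_pos {A : Matrix m m ℂ} (hA : A.IsHermitian)
    (htr : A.trace = 1) : 0 < maxEig A := by
  have hsum : ∑ i, hA.eigenvalues i = 1 := by
    simpa [htr] using congrArg Complex.re hA.trace_eq_sum_eigenvalues.symm
  obtain ⟨i, -, hi⟩ := Finset.exists_lt_of_sum_lt (s := Finset.univ) (f := 0)
    (g := hA.eigenvalues) (by simp [hsum])
  exact hi.trans_le (hA.eigenvalues_le_maxEig i)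

end Spectrum

theorem trace_smul_sub_smul_of_trace_eq_one {ρ σ : Matrix m m ℂ} (hρ : ρ.trace = 1)
    (hσ : σ.trace = 1) (a b : ℝ) : (a • ρ - b • σ).trace = ((a - b : ℝ) : ℂ) := by
  simp [trace_sub, trace_smul, hρ, hσ, Complex.real_smul]

namespace QPE

variable {ρ σ : Matrix m m ℂ}

theorem maxEig_le (hρ : ρ.trace = 1) (hσ : σ.trace = 1) (h : QPE ρ σ) :
    maxEig ρ ≤ maxEig σ := by
  have htr := h.trace_nonneg
  rw [trace_smul_sub_smul_of_trace_eq_one hρ hσ, Complex.zero_le_real] at htr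
  linarith

theorem eq_of_maxEig_eq [DecidableEq m] (hρ : ρ.trace = 1) (hσ : σ.IsHermitian)
    (hσtr : σ.trace = 1) (h : QPE ρ σ) (heq : maxEig ρ = maxEig σ) : ρ = σ := by
  have hzero : maxEig σ • ρ - maxEig ρ • σ = 0 := h.trace_eq_zero_iff.mp <| by
    rw [trace_smul_sub_smul_of_trace_eq_one hρ hσtr, heq, sub_self, Complex.ofReal_zero]
  rw [heq, ← smul_sub] at hzero
  exact sub_eq_zero.mp ((smul_eq_zero_iff_right (hσ.maxEig_pos hσtr).ne').mp hzero)

end QPE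

theorem stmt0 {n : ℕ} (ρ σ : Matrix (Fin n) (Fin n) ℂ)
    (hρ : IsDensity ρ) (hσ : IsDensity σ) (h : QPE ρ σ) :
    maxEig ρ ≤ maxEig σ ∧ (maxEig ρ = maxEig σ → ρ = σ) :=
  ⟨h.maxEig_le hρ.2 hσ.2, h.eq_of_maxEig_eq hρ.2 hσ.1.1 hσ.2⟩
end

section
/- Let ρ and σ be density matrices on M_n(ℂ) with ρ ⊑ σ in the QPE order. Then every eigenvector of σ with eigenvalue σ⁺ is an eigenvector of ρ with eigenvalue ρ⁺: if v ∈ ℂⁿ satisfies σ · v = σ⁺ • v, then ρ · v = ρ⁺ • v. -/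
open Matrix
open scoped ComplexOrder

section Aux

variable {n : ℕ}

/-- Any eigenvalue (in the real sense) of a Hermitian matrix is one of the
`IsHermitian.eigenvalues`. -/
lemma mem_eig {A : Matrix (Fin n) (Fin n) ℂ} (hA : A.IsHermitian)
    {a : ℝ} {v : Fin n → ℂ} (hv : v ≠ 0) (h : A.mulVec v = (a : ℂ) • v) :
    ∃ i, hA.eigenvalues i = a := by
  classical
  set U : Matrix (Fin n) (Fin n) ℂ := (hA.eigenvectorUnitary : Matrix (Fin n) (Fin n) ℂ) with hU
  set w := (star U) *ᵥ v with hw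
  have hwne : w ≠ 0 := by
    intro h0
    apply hv
    have := congrArg (fun x => U *ᵥ x) h0
    simpa [hw, hU, mulVec_mulVec, (Matrix.mem_unitaryGroup_iff.mp hA.eigenvectorUnitary.2)]
      using this
  have key : (diagonal (RCLike.ofReal ∘ hA.eigenvalues)) *ᵥ w = (a : ℂ) • w := by
    have h1 : (star U) *ᵥ (A *ᵥ v) = (a : ℂ) • w := by
      rw [h]; simp [hw, mulVec_smul]
    have h2 : (star U) *ᵥ (A *ᵥ v)
        = (diagonal (RCLike.ofReal ∘ hA.eigenvalues)) *ᵥ w := by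
      conv_lhs => rw [hA.spectral_theorem, Unitary.conjStarAlgAut_apply]
      simp only [hw, mulVec_mulVec, hU, Matrix.mul_assoc]
      rw [← Matrix.mul_assoc (star (hA.eigenvectorUnitary : Matrix (Fin n) (Fin n) ℂ))]
      rw [Matrix.mem_unitaryGroup_iff'.mp hA.eigenvectorUnitary.2, Matrix.one_mul]
    rw [← h1, h2]
  obtain ⟨i, hi⟩ := Function.ne_iff.mp hwne
  refine ⟨i, ?_⟩
  have hkey := congrFun key i
  simp only [mulVec_diagonal, Function.comp_apply, Pi.smul_apply, smul_eq_mul] at hkey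
  have : (hA.eigenvalues i : ℂ) = (a : ℂ) := mul_right_cancel₀ hi hkey
  exact_mod_cast this

lemma eig_le_maxEig {A : Matrix (Fin n) (Fin n) ℂ} (hA : A.IsHermitian) (i : Fin n) :
    hA.eigenvalues i ≤ maxEig A := by
  classical
  apply le_csSup
  · -- bounded above: the set is contained in the finite range of eigenvalues
    apply Set.Finite.bddAbove
    apply Set.Finite.subset (Set.finite_range hA.eigenvalues)
    rintro a ⟨v, hv, h⟩
    obtain ⟨j, hj⟩ := mem_eig hA hv h
    exact ⟨j, hj⟩
  · exact ⟨_, (WithLp.ofLp_eq_zero 2).not.mpr (hA.eigenvectorBasis.orthonormal.ne_zero i), hA.mulVec_eigenvectorBasis i⟩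

/-- `maxEig A • 1 - A` is positive semidefinite for Hermitian `A`. -/
lemma maxEig_smul_one_sub_posSemidef {A : Matrix (Fin n) (Fin n) ℂ} (hA : A.IsHermitian) :
    ((maxEig A : ℂ) • (1 : Matrix (Fin n) (Fin n) ℂ) - A).PosSemidef := by
  classical
  have hB : ((maxEig A : ℂ) • (1 : Matrix (Fin n) (Fin n) ℂ) - A).IsHermitian := by
    simp [Matrix.IsHermitian, conjTranspose_sub, conjTranspose_smul, hA.eq]
  rw [hB.posSemidef_iff_eigenvalues_nonneg]; simp only [Pi.le_def, Pi.zero_apply]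
  intro i
  -- each eigenvalue μ of B gives an eigenvalue maxEig A - μ of A
  have hvne := (WithLp.ofLp_eq_zero 2).not.mpr (hB.eigenvectorBasis.orthonormal.ne_zero i)
  have hveq := hB.mulVec_eigenvectorBasis i
  set μ := hB.eigenvalues i
  set v := ⇑(hB.eigenvectorBasis i)
  have hAv : A.mulVec v = ((maxEig A - μ : ℝ) : ℂ) • v := by
    have : ((maxEig A : ℂ) • (1 : Matrix (Fin n) (Fin n) ℂ) - A) *ᵥ v = (μ : ℂ) • v := by
      rw [hveq]; funext j; simp [Complex.real_smul]
    have h1 : (maxEig A : ℂ) • v - A *ᵥ v = (μ : ℂ) • v := by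
      simpa [sub_mulVec, smul_mulVec] using this
    push_cast
    rw [sub_smul, ← h1]
    ring_nf
  have : maxEig A - μ ≤ maxEig A := by
    obtain ⟨j, hj⟩ := mem_eig hA hvne hAv
    calc maxEig A - μ = hA.eigenvalues j := hj.symm
    _ ≤ maxEig A := eig_le_maxEig hA j
  linarith

/-- `0 < maxEig` for a density matrix. -/
lemma maxEig_pos {A : Matrix (Fin n) (Fin n) ℂ} (hA : IsDensity A) : 0 < maxEig A := by
  classical
  obtain ⟨hpsd, htr⟩ := hA
  have hherm := hpsd.isHermitian
  -- trace = sum of eigenvalues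
  have htr2 : A.trace = ∑ i, (hherm.eigenvalues i : ℂ) := by
    conv_lhs => rw [hherm.spectral_theorem, Unitary.conjStarAlgAut_apply]
    rw [Matrix.trace_mul_cycle]
    rw [Matrix.mem_unitaryGroup_iff'.mp hherm.eigenvectorUnitary.2,
      Matrix.one_mul, Matrix.trace_diagonal]
    rfl
  have hsum : (∑ i, hherm.eigenvalues i) = 1 := by
    have := htr ▸ htr2
    exact_mod_cast this.symm
  by_contra hle
  push_neg at hle
  have : (∑ i, hherm.eigenvalues i) ≤ 0 := by
    apply Finset.sum_nonpos
    intro i _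
    exact le_trans (eig_le_maxEig hherm i) hle
  rw [hsum] at this
  linarith

end Aux

theorem stmt1 {n : ℕ} (ρ σ : Matrix (Fin n) (Fin n) ℂ)
    (hρ : IsDensity ρ) (hσ : IsDensity σ) (h : QPE ρ σ)
    (v : Fin n → ℂ) (hv : σ.mulVec v = (maxEig σ : ℂ) • v) :
    ρ.mulVec v = (maxEig ρ : ℂ) • v := by
  classical
  set r := maxEig ρ
  set s := maxEig σ
  have hs : 0 < s := maxEig_pos hσ
  set B := (r : ℂ) • (1 : Matrix (Fin n) (Fin n) ℂ) - ρ with hB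
  have hBpsd : B.PosSemidef := maxEig_smul_one_sub_posSemidef hρ.1.isHermitian
  set d := star v ⬝ᵥ (B *ᵥ v) with hd
  have hd0 : 0 ≤ d := hBpsd.dotProduct_mulVec_nonneg v
  -- From QPE: 0 ≤ star v ⬝ᵥ (s•ρ - r•σ) v = -s • d
  have hqpe := h.dotProduct_mulVec_nonneg v
  have hexpand : star v ⬝ᵥ ((maxEig σ • ρ - maxEig ρ • σ) *ᵥ v) = -((s : ℂ) * d) := by
    rw [sub_mulVec, dotProduct_sub]
    have h1 : (maxEig σ • ρ) *ᵥ v = (s : ℂ) • (ρ *ᵥ v) := by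
      rw [smul_mulVec]; funext j; simp [Complex.real_smul, s]
    have h2 : (maxEig ρ • σ) *ᵥ v = (r : ℂ) • (σ *ᵥ v) := by
      rw [smul_mulVec]; funext j; simp [Complex.real_smul, r]
    rw [h1, h2, hv, hd, hB, sub_mulVec, smul_mulVec, one_mulVec]
    simp only [dotProduct_smul, dotProduct_sub, smul_eq_mul]
    ring
  rw [hexpand] at hqpe
  have hsd : (s : ℂ) * d = 0 := by
    have h1 : (s : ℂ) * d ≤ 0 := by simpa using hqpe
    have h2 : 0 ≤ (s : ℂ) * d := by
      have : (0 : ℂ) < (s : ℂ) := by exact_mod_cast hs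
      exact mul_nonneg this.le hd0
    exact le_antisymm h1 h2
  have hdz : d = 0 := by
    rcases mul_eq_zero.mp hsd with h' | h'
    · exact absurd h' (by exact_mod_cast hs.ne')
    · exact h'
  have hBv : B *ᵥ v = 0 :=
    (hBpsd.dotProduct_mulVec_zero_iff v).mp (by rw [← hd]; exact hdz)
  have : (r : ℂ) • v - ρ *ᵥ v = 0 := by
    simpa [hB, sub_mulVec, smul_mulVec, one_mulVec] using hBv
  exact (sub_eq_zero.mp this).symm
end

section
/- Pure states are maximal in the QPE order and their lower sets are characterized by top eigenvectors: for a unit vector v ∈ ℂⁿ, let P = v v† be the corresponding rank-one projection (a density matrix). Then (i) for every density matrix σ, P ⊑ σ implies σ = P; and (ii) for every density matrix ρ, ρ ⊑ P if and only if ρ · v = ρ⁺ • v. -/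
open Matrix
open scoped ComplexOrder

namespace QpeAux

variable {n : ℕ}

/-- The set of (real) eigenvalues of `A` that admit an eigenvector. -/
def S (A : Matrix (Fin n) (Fin n) ℂ) : Set ℝ :=
  {a : ℝ | ∃ x : Fin n → ℂ, x ≠ 0 ∧ A.mulVec x = (a : ℂ) • x}

lemma maxEig_eq_sSup (A : Matrix (Fin n) (Fin n) ℂ) : maxEig A = sSup (S A) := rfl

lemma real_smul_mat (r : ℝ) (M : Matrix (Fin n) (Fin n) ℂ) : r • M = (r : ℂ) • M := by
  ext i j
  simp [Complex.real_smul]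

lemma star_dot (x u : Fin n → ℂ) : star x ⬝ᵥ u = starRingEnd ℂ (star u ⬝ᵥ x) := by
  simp [dotProduct, map_sum, mul_comm]

lemma vvmul (a b x : Fin n → ℂ) : vecMulVec a b *ᵥ x = (b ⬝ᵥ x) • a := by
  ext i
  simp [vecMulVec_apply, mulVec, dotProduct, Finset.mul_sum, mul_assoc, mul_comm, mul_left_comm]

lemma vvherm (v : Fin n → ℂ) : (vecMulVec v (star v)).IsHermitian := by
  ext i j
  simp [conjTranspose_apply, vecMulVec_apply, mul_comm]

lemma vvpsd (v : Fin n → ℂ) : (vecMulVec v (star v)).PosSemidef := by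
  refine PosSemidef.of_dotProduct_mulVec_nonneg (vvherm v) fun x => ?_
  rw [vvmul, dotProduct_smul, smul_eq_mul, star_dot]
  exact star_mul_self_nonneg (star x ⬝ᵥ v)

lemma vvtrace (v : Fin n → ℂ) : (vecMulVec v (star v)).trace = star v ⬝ᵥ v := by
  simp [trace, diag, vecMulVec_apply, dotProduct, mul_comm]

lemma trace_psd_nonneg {M : Matrix (Fin n) (Fin n) ℂ} (hM : M.PosSemidef) : 0 ≤ M.trace := by
  refine Finset.sum_nonneg fun i _ => ?_
  have := hM.dotProduct_mulVec_nonneg (Pi.single i 1)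
  simpa [mulVec_single, dotProduct, Pi.single_apply, Finset.sum_ite_eq] using this

lemma psd_trace_zero {M : Matrix (Fin n) (Fin n) ℂ} (hM : M.PosSemidef) (h : M.trace = 0) :
    M = 0 := by
  have hd : ∀ i, M i i = 0 := by
    have := (Finset.sum_eq_zero_iff_of_nonneg (fun i _ => by
      have := hM.dotProduct_mulVec_nonneg (Pi.single i 1)
      simpa [mulVec_single, dotProduct, Pi.single_apply, Finset.sum_ite_eq] using this)).mp h
    exact fun i => this i (Finset.mem_univ i)
  have hcol : ∀ j, M *ᵥ Pi.single j 1 = 0 := by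
    intro j
    rw [← (hM.dotProduct_mulVec_zero_iff (Pi.single j 1))]
    simpa [mulVec_single, dotProduct, Pi.single_apply, Finset.sum_ite_eq] using hd j
  ext i j
  have := congrFun (hcol j) i
  simpa [mulVec_single] using this

lemma key {A : Matrix (Fin n) (Fin n) ℂ} (hA : A.PosSemidef) {u : Fin n → ℂ}
    (hu : star u ⬝ᵥ u = 1) {a : ℝ} (h : A *ᵥ u = (a : ℂ) • u) :
    (A - (a : ℂ) • vecMulVec u (star u)).PosSemidef := by
  have herm : (A - (a : ℂ) • vecMulVec u (star u)).IsHermitian := by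
    refine hA.1.sub ?_
    unfold Matrix.IsHermitian
    rw [conjTranspose_smul, (vvherm u).eq, Complex.star_def, Complex.conj_ofReal]
  have hrow : star u ᵥ* A = (a : ℂ) • star u := by
    have h1 : star (A *ᵥ u) = star u ᵥ* Aᴴ := star_mulVec A u
    rw [hA.1.eq] at h1
    rw [← h1, h, star_smul, Complex.star_def, Complex.conj_ofReal]
  refine PosSemidef.of_dotProduct_mulVec_nonneg herm fun x => ?_
  set c : ℂ := star u ⬝ᵥ x with hc
  have main : star x ⬝ᵥ ((A - (a : ℂ) • vecMulVec u (star u)) *ᵥ x)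
      = star (x - c • u) ⬝ᵥ (A *ᵥ (x - c • u)) := by
    have e1 : star u ⬝ᵥ (A *ᵥ x) = (a : ℂ) * c := by
      rw [dotProduct_mulVec, hrow, smul_dotProduct, smul_eq_mul, hc]
    have e2 : star x ⬝ᵥ u = starRingEnd ℂ c := by rw [hc, star_dot]
    have e3 : star x ⬝ᵥ (vecMulVec u (star u) *ᵥ x) = c * starRingEnd ℂ c := by
      rw [vvmul, ← hc, dotProduct_smul, smul_eq_mul, e2]
    simp only [sub_mulVec, smul_mulVec, dotProduct_sub, dotProduct_smul, smul_eq_mul, e3,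
      star_sub, star_smul, mulVec_sub, mulVec_smul, h, sub_dotProduct, smul_dotProduct,
      dotProduct_smul, e1, e2, hu, star_dot u ((a : ℂ) • u)]
    simp only [Complex.star_def]
    ring
  rw [main]
  exact hA.dotProduct_mulVec_nonneg _

lemma eig_mem {A : Matrix (Fin n) (Fin n) ℂ} (hA : A.IsHermitian) (i : Fin n) :
    hA.eigenvalues i ∈ S A := by
  refine ⟨(hA.eigenvectorBasis i).ofLp, ?_, ?_⟩
  · intro hx
    have hnorm := hA.eigenvectorBasis.orthonormal.1 i
    have : hA.eigenvectorBasis i = 0 := by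
      ext j; exact congrFun hx j
    rw [this] at hnorm
    simp at hnorm
  · rw [hA.mulVec_eigenvectorBasis i]
    ext j
    simp [Complex.real_smul]

lemma ub_psd {A : Matrix (Fin n) (Fin n) ℂ} (hA : A.IsHermitian) {μ : ℝ}
    (hμ : ∀ i, hA.eigenvalues i ≤ μ) : ((μ : ℂ) • 1 - A).PosSemidef := by
  have hU : (hA.eigenvectorUnitary : Matrix (Fin n) (Fin n) ℂ)
      * star (hA.eigenvectorUnitary : Matrix (Fin n) (Fin n) ℂ) = 1 :=
    mem_unitaryGroup_iff.mp hA.eigenvectorUnitary.2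
  have hdiag : ((μ : ℂ) • 1 - diagonal (RCLike.ofReal ∘ hA.eigenvalues)
      : Matrix (Fin n) (Fin n) ℂ) = diagonal (fun i => ((μ - hA.eigenvalues i : ℝ) : ℂ)) := by
    ext i j
    by_cases h : i = j <;>
      simp [h, diagonal, Matrix.one_apply, Matrix.smul_apply, Matrix.sub_apply, Complex.ofReal_sub]
  have key : (μ : ℂ) • 1 - A
      = (hA.eigenvectorUnitary : Matrix (Fin n) (Fin n) ℂ)
        * ((μ : ℂ) • 1 - diagonal (RCLike.ofReal ∘ hA.eigenvalues))
        * star (hA.eigenvectorUnitary : Matrix (Fin n) (Fin n) ℂ) := by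
    rw [mul_sub, sub_mul, Matrix.mul_smul, mul_one, Matrix.smul_mul, hU]
    congr 1
    exact hA.spectral_theorem
  rw [key, hdiag, Matrix.star_eq_conjTranspose (hA.eigenvectorUnitary : Matrix (Fin n) (Fin n) ℂ)]
  exact Matrix.PosSemidef.mul_mul_conjTranspose_same
    (Matrix.posSemidef_diagonal_iff.mpr fun i => by
      rw [Complex.zero_le_real (x := μ - hA.eigenvalues i)]
      exact sub_nonneg.mpr (hμ i)) _

lemma S_ub {A : Matrix (Fin n) (Fin n) ℂ} (hA : A.IsHermitian) {μ : ℝ}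
    (hμ : ∀ i, hA.eigenvalues i ≤ μ) : ∀ a ∈ S A, a ≤ μ := by
  rintro a ⟨x, hx, hax⟩
  have h0 := (ub_psd hA hμ).dotProduct_mulVec_nonneg x
  have hquad : star x ⬝ᵥ (((μ : ℂ) • 1 - A) *ᵥ x)
      = ((μ - a : ℝ) : ℂ) * (star x ⬝ᵥ x) := by
    rw [sub_mulVec, smul_mulVec, one_mulVec, hax, dotProduct_sub, dotProduct_smul,
      dotProduct_smul]
    simp only [smul_eq_mul]
    push_cast
    ring
  rw [hquad] at h0
  have hx0 : 0 < star x ⬝ᵥ x := by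
    rw [Matrix.dotProduct_star_self_pos_iff]
    exact hx
  rw [Complex.lt_def] at hx0
  rw [Complex.le_def] at h0
  simp only [Complex.zero_re, Complex.zero_im, Complex.mul_re, Complex.ofReal_re,
    Complex.ofReal_im, zero_mul, sub_zero] at h0 hx0
  nlinarith [h0.1, hx0.1]

lemma maxEig_isGreatest {A : Matrix (Fin n) (Fin n) ℂ} (hn : 0 < n) (hA : A.IsHermitian) :
    IsGreatest (S A) (maxEig A) := by
  haveI : Nonempty (Fin n) := ⟨⟨0, hn⟩⟩
  obtain ⟨i, -, hi⟩ := Finset.exists_mem_eq_sup' Finset.univ_nonempty hA.eigenvalues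
  have hub : ∀ j, hA.eigenvalues j ≤ Finset.univ.sup' Finset.univ_nonempty hA.eigenvalues :=
    fun j => Finset.le_sup' _ (Finset.mem_univ j)
  have hg : IsGreatest (S A) (Finset.univ.sup' Finset.univ_nonempty hA.eigenvalues) :=
    ⟨hi ▸ eig_mem hA i, S_ub hA hub⟩
  rw [maxEig_eq_sSup, hg.csSup_eq]
  exact hg

lemma density_S_le_one {ρ : Matrix (Fin n) (Fin n) ℂ} (hρ : IsDensity ρ) :
    ∀ a ∈ S ρ, a ≤ 1 := by
  rintro a ⟨x, hx, hax⟩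
  have hx0 : 0 < star x ⬝ᵥ x := by
    rw [Matrix.dotProduct_star_self_pos_iff]; exact hx
  set s : ℝ := (star x ⬝ᵥ x).re with hs
  have hsx : star x ⬝ᵥ x = (s : ℂ) := by
    rw [Complex.lt_def] at hx0
    exact Complex.ext rfl (by simpa using hx0.2.symm)
  have hspos : 0 < s := by
    rw [Complex.lt_def] at hx0
    simpa using hx0.1
  set u : Fin n → ℂ := ((Real.sqrt s)⁻¹ : ℂ) • x with hu
  have huu : star u ⬝ᵥ u = 1 := by
    rw [hu, star_smul, smul_dotProduct, dotProduct_smul, hsx, smul_eq_mul, smul_eq_mul,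
      Complex.star_def]
    rw [map_inv₀, Complex.conj_ofReal]
    norm_cast
    rw [← mul_assoc, ← mul_inv, Real.mul_self_sqrt hspos.le]
    field_simp
  have hau : ρ *ᵥ u = (a : ℂ) • u := by
    rw [hu, mulVec_smul, hax, smul_comm]
  have hpsd := key hρ.1 huu hau
  have htr := trace_psd_nonneg hpsd
  rw [trace_sub, trace_smul, vvtrace, huu, hρ.2, smul_eq_mul, mul_one, Complex.le_def] at htr
  simp only [Complex.zero_re, Complex.sub_re, Complex.one_re, Complex.ofReal_re] at htr
  linarith [htr.1]

end QpeAux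

open QpeAux in
theorem stmt6 {n : ℕ} (v : Fin n → ℂ) (hv : star v ⬝ᵥ v = 1) :
    (∀ σ : Matrix (Fin n) (Fin n) ℂ, IsDensity σ →
      QPE (vecMulVec v (star v)) σ → σ = vecMulVec v (star v)) ∧
    (∀ ρ : Matrix (Fin n) (Fin n) ℂ, IsDensity ρ →
      (QPE ρ (vecMulVec v (star v)) ↔ ρ.mulVec v = (maxEig ρ : ℂ) • v)) := by
  have hn : 0 < n := by
    rcases Nat.eq_zero_or_pos n with h | h
    · subst h
      simp [dotProduct] at hv
    · exact h
  have hv0 : v ≠ 0 := by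
    intro h
    rw [h] at hv
    simp at hv
  set P : Matrix (Fin n) (Fin n) ℂ := vecMulVec v (star v) with hP
  have hPdens : IsDensity P := ⟨vvpsd v, by rw [hP, vvtrace, hv]⟩
  have hPv : P *ᵥ v = v := by
    rw [hP, vvmul, hv, one_smul]
  have hmaxP : maxEig P = 1 := by
    have hg := maxEig_isGreatest hn (vvpsd v).1
    have h1 : (1 : ℝ) ∈ S P := ⟨v, hv0, by rw [hPv, Complex.ofReal_one, one_smul]⟩
    exact le_antisymm (density_S_le_one hPdens _ hg.1) (hg.2 h1)
  constructor
  · intro σ hσ hQ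
    have hgσ := maxEig_isGreatest hn hσ.1.1
    have hle1 : maxEig σ ≤ 1 := density_S_le_one hσ _ hgσ.1
    rw [QPE, hmaxP, one_smul] at hQ
    have htr := trace_psd_nonneg hQ
    rw [trace_sub, trace_smul, hPdens.2, hσ.2, Complex.real_smul, mul_one, Complex.le_def] at htr
    simp only [Complex.zero_re, Complex.zero_im, Complex.sub_re, Complex.one_re,
      Complex.ofReal_re] at htr
    have heq : maxEig σ = 1 := le_antisymm hle1 (by linarith [htr.1])
    rw [heq, one_smul] at hQ
    have : P - σ = 0 := by
      refine psd_trace_zero hQ ?_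
      rw [trace_sub, hPdens.2, hσ.2, sub_self]
    have := sub_eq_zero.mp this
    exact this.symm
  · intro ρ hρ
    constructor
    · intro hQ
      rw [QPE, hmaxP, one_smul, real_smul_mat] at hQ
      have hgρ := maxEig_isGreatest hn hρ.1.1
      have hub : ∀ i, hρ.1.1.eigenvalues i ≤ maxEig ρ := fun i => hgρ.2 (eig_mem hρ.1.1 i)
      have hN := ub_psd hρ.1.1 hub
      have a1 := hQ.dotProduct_mulVec_nonneg v
      have a2 := hN.dotProduct_mulVec_nonneg v
      have hMv : (ρ - (maxEig ρ : ℂ) • P) *ᵥ v = ρ *ᵥ v - (maxEig ρ : ℂ) • v := by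
        rw [sub_mulVec, smul_mulVec, hPv]
      have hNv : (((maxEig ρ : ℂ) • 1 - ρ)) *ᵥ v = (maxEig ρ : ℂ) • v - ρ *ᵥ v := by
        rw [sub_mulVec, smul_mulVec, one_mulVec]
      have hsum : star v ⬝ᵥ ((ρ - (maxEig ρ : ℂ) • P) *ᵥ v)
          + star v ⬝ᵥ (((maxEig ρ : ℂ) • 1 - ρ) *ᵥ v) = 0 := by
        rw [hMv, hNv, ← dotProduct_add]
        simp
      have hz : star v ⬝ᵥ ((ρ - (maxEig ρ : ℂ) • P) *ᵥ v) = 0 := by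
        have h1 : star v ⬝ᵥ ((ρ - (maxEig ρ : ℂ) • P) *ᵥ v)
            = -(star v ⬝ᵥ (((maxEig ρ : ℂ) • 1 - ρ) *ᵥ v)) := by linear_combination hsum
        refine le_antisymm ?_ a1
        rw [h1]
        simpa using a2
      have := (hQ.dotProduct_mulVec_zero_iff v).mp hz
      rw [hMv] at this
      exact sub_eq_zero.mp this
    · intro h
      rw [QPE, hmaxP, one_smul, real_smul_mat]
      exact key hρ.1 hv h
end

section
/- If ρ and σ are density matrices on M_n(ℂ) with ρ ⊑ σ in the QPE order, then their spectra satisfy the classical positive-evidence order: listing the eigenvalues of ρ as λ₁(ρ) ≥ λ₂(ρ) ≥ … ≥ λₙ(ρ) and those of σ as λ₁(σ) ≥ … ≥ λₙ(σ) in decreasing order, one has σ⁺ · λᵢ(ρ) − ρ⁺ · λᵢ(σ) ≥ 0 for all 1 ≤ i ≤ n. -/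
open Matrix
open scoped ComplexOrder

lemma quadform {n : ℕ} {M : Matrix (Fin n) (Fin n) ℂ} (hM : M.IsHermitian)
    (x : EuclideanSpace ℂ (Fin n)) :
    star (x : Fin n → ℂ) ⬝ᵥ M *ᵥ (x : Fin n → ℂ)
      = ∑ j, (hM.eigenvalues j : ℂ) * (‖hM.eigenvectorBasis.repr x j‖ : ℂ)^2 := by
  set b := hM.eigenvectorBasis with hb
  have key : star (x : Fin n → ℂ) ⬝ᵥ M *ᵥ (x : Fin n → ℂ)
      = inner (𝕜 := ℂ) x (Matrix.toEuclideanLin M x) := by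
    rw [EuclideanSpace.inner_eq_star_dotProduct, dotProduct_comm]; rfl
  have hTb : ∀ j, Matrix.toEuclideanLin M (b j) = (hM.eigenvalues j : ℂ) • b j := by
    intro j
    have h0 : M *ᵥ ⇑(b j) = (hM.eigenvalues j : ℂ) • ⇑(b j) := by
      rw [hM.mulVec_eigenvectorBasis]
      ext i
      simp [Complex.real_smul, hb]
    apply_fun (WithLp.equiv 2 (Fin n → ℂ))
    simpa [Matrix.toEuclideanLin_apply] using h0
  have hTx : Matrix.toEuclideanLin M x = ∑ j, (b.repr x j * hM.eigenvalues j) • b j := by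
    conv_lhs => rw [← b.sum_repr x, map_sum]
    refine Finset.sum_congr rfl fun j _ => ?_
    rw [LinearMap.map_smul, hTb, smul_smul]
  rw [key, hTx, inner_sum]
  refine Finset.sum_congr rfl fun j _ => ?_
  have h2 : inner (𝕜 := ℂ) x (b j) = (starRingEnd ℂ) (b.repr x j) := by
    rw [b.repr_apply_apply, inner_conj_symm]
  rw [inner_smul_right, h2, mul_comm (b.repr x j), mul_assoc, RCLike.mul_conj]
  rfl

lemma quadform_re {n : ℕ} {M : Matrix (Fin n) (Fin n) ℂ} (hM : M.IsHermitian)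
    (x : EuclideanSpace ℂ (Fin n)) :
    Complex.re (star (x : Fin n → ℂ) ⬝ᵥ M *ᵥ (x : Fin n → ℂ))
      = ∑ j, hM.eigenvalues j * ‖hM.eigenvectorBasis.repr x j‖^2 := by
  rw [quadform hM x]
  rw [Complex.re_sum]
  refine Finset.sum_congr rfl fun j _ => ?_
  rw [← Complex.ofReal_pow, ← Complex.ofReal_mul, Complex.ofReal_re]

lemma sum_sq_repr {n : ℕ} (b : OrthonormalBasis (Fin n) ℂ (EuclideanSpace ℂ (Fin n)))
    (x : EuclideanSpace ℂ (Fin n)) :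
    ∑ j, ‖b.repr x j‖^2 = ‖x‖^2 := by
  have h1 : ‖b.repr x‖ = ‖x‖ := b.repr.norm_map x
  have h2 : ‖b.repr x‖^2 = ∑ j, ‖b.repr x j‖^2 := by
    rw [EuclideanSpace.norm_eq, Real.sq_sqrt]
    positivity
  rw [← h2, h1]

lemma sum_eigenvalues_eq_one {n : ℕ} {A : Matrix (Fin n) (Fin n) ℂ} (hA : IsDensity A) :
    ∑ j, hA.1.1.eigenvalues j = 1 := by
  set hH := hA.1.1
  have h1 : A.trace = ∑ j, (hH.eigenvalues j : ℂ) := by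
    conv_lhs => rw [hH.spectral_theorem]
    rw [Unitary.conjStarAlgAut_apply, Matrix.trace_mul_comm, ← mul_assoc]
    rw [(Matrix.mem_unitaryGroup_iff').mp (Matrix.IsHermitian.eigenvectorUnitary hH).2]
    rw [one_mul, Matrix.trace_diagonal]
    rfl
  rw [hA.2] at h1
  have := congrArg Complex.re h1
  simpa [Complex.re_sum] using this.symm

lemma eig_le_one {n : ℕ} {A : Matrix (Fin n) (Fin n) ℂ} (hA : IsDensity A) (j : Fin n) :
    hA.1.1.eigenvalues j ≤ 1 := by
  rw [← sum_eigenvalues_eq_one hA]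
  exact Finset.single_le_sum (fun k _ => hA.1.eigenvalues_nonneg k) (Finset.mem_univ j)

lemma maxEig_set_bddAbove {n : ℕ} {A : Matrix (Fin n) (Fin n) ℂ} (hA : IsDensity A) :
    BddAbove {a : ℝ | ∃ v : Fin n → ℂ, v ≠ 0 ∧ A.mulVec v = (a : ℂ) • v} := by
  refine ⟨1, fun a ha => ?_⟩
  obtain ⟨v, hv0, hv⟩ := ha
  set x : EuclideanSpace ℂ (Fin n) := WithLp.toLp 2 v with hx
  have hxn : (0:ℝ) < ‖x‖^2 := by
    have h0 : (0:ℝ) < ‖x‖ := norm_pos_iff.mpr (by simpa [hx] using hv0)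
    positivity
  have e1 : Complex.re (star (x : Fin n → ℂ) ⬝ᵥ A *ᵥ (x : Fin n → ℂ)) = a * ‖x‖^2 := by
    have : star (x : Fin n → ℂ) ⬝ᵥ A *ᵥ (x : Fin n → ℂ)
        = (a : ℂ) * (inner (𝕜 := ℂ) x x) := by
      show star v ⬝ᵥ A *ᵥ v = _
      rw [hv, dotProduct_smul]
      rw [EuclideanSpace.inner_eq_star_dotProduct, dotProduct_comm]; rfl
    rw [this, Complex.mul_re, Complex.ofReal_re, Complex.ofReal_im]
    have h1 : Complex.re (inner (𝕜 := ℂ) x x) = ‖x‖^2 := inner_self_eq_norm_sq (𝕜 := ℂ) x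
    rw [h1]
    ring
  have e2 : Complex.re (star (x : Fin n → ℂ) ⬝ᵥ A *ᵥ (x : Fin n → ℂ)) ≤ ‖x‖^2 := by
    rw [quadform_re hA.1.1 x]
    calc ∑ j, hA.1.1.eigenvalues j * ‖(hA.1.1.eigenvectorBasis.repr x) j‖^2
        ≤ ∑ j, 1 * ‖(hA.1.1.eigenvectorBasis.repr x) j‖^2 := by
          refine Finset.sum_le_sum fun j _ => ?_
          exact mul_le_mul_of_nonneg_right (eig_le_one hA j) (by positivity)
      _ = ‖x‖^2 := by
          simp only [one_mul]
          exact sum_sq_repr _ x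
  rw [e1] at e2
  nlinarith

lemma maxEig_nonneg {n : ℕ} (hn : 0 < n) {A : Matrix (Fin n) (Fin n) ℂ} (hA : IsDensity A) :
    0 ≤ maxEig A := by
  set j0 : Fin n := ⟨0, hn⟩
  have hmem : hA.1.1.eigenvalues j0 ∈
      {a : ℝ | ∃ v : Fin n → ℂ, v ≠ 0 ∧ A.mulVec v = (a : ℂ) • v} := by
    refine ⟨⇑(hA.1.1.eigenvectorBasis j0), by simpa using hA.1.1.eigenvectorBasis.orthonormal.ne_zero j0, ?_⟩
    rw [hA.1.1.mulVec_eigenvectorBasis]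
    ext i
    simp [Complex.real_smul]
  exact le_trans (hA.1.eigenvalues_nonneg j0) (le_csSup (maxEig_set_bddAbove hA) hmem)

lemma repr_eq_zero_of_mem_span {n : ℕ}
    (b : OrthonormalBasis (Fin n) ℂ (EuclideanSpace ℂ (Fin n)))
    {S : Set (Fin n)} {x : EuclideanSpace ℂ (Fin n)}
    (hx : x ∈ Submodule.span ℂ (⇑b '' S)) {j : Fin n} (hj : j ∉ S) :
    b.repr x j = 0 := by
  rw [← b.coe_toBasis] at hx
  have := (Module.Basis.mem_span_image b.toBasis).mp hx
  rw [← b.coe_toBasis_repr_apply]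
  by_contra h
  exact hj (this (Finsupp.mem_support_iff.mpr h))

lemma dim_span_basis {n : ℕ} (b : OrthonormalBasis (Fin n) ℂ (EuclideanSpace ℂ (Fin n)))
    (S : Set (Fin n)) [Fintype S] :
    Module.finrank ℂ (Submodule.span ℂ (⇑b '' S)) = Fintype.card S := by
  have li : LinearIndependent ℂ (fun x : S => b x) := by
    have : (fun x : S => b x) = ⇑b.toBasis ∘ (fun x : S => (x : Fin n)) := by
      ext x; simp
    rw [this]
    exact b.toBasis.linearIndependent.comp _ Subtype.val_injective
  rw [Set.image_eq_range, finrank_span_eq_card li]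

theorem stmt11 {n : ℕ} (ρ σ : Matrix (Fin n) (Fin n) ℂ)
    (hρ : IsDensity ρ) (hσ : IsDensity σ) (h : QPE ρ σ)
    (eρ eσ : Fin n ≃ Fin n)
    (hmρ : Antitone fun i => hρ.1.1.eigenvalues (eρ i))
    (hmσ : Antitone fun i => hσ.1.1.eigenvalues (eσ i)) :
    ∀ i : Fin n,
      0 ≤ maxEig σ * hρ.1.1.eigenvalues (eρ i) - maxEig ρ * hσ.1.1.eigenvalues (eσ i) := by
  classical
  intro i
  have hn : 0 < n := i.pos
  have hs : 0 ≤ maxEig σ := maxEig_nonneg hn hσ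
  have hr : 0 ≤ maxEig ρ := maxEig_nonneg hn hρ
  set S : Set (Fin n) := ⇑eσ '' Set.Iic i with hS
  set T : Set (Fin n) := ⇑eρ '' Set.Ici i with hT
  set W := Submodule.span ℂ (⇑hσ.1.1.eigenvectorBasis '' S) with hW
  set U := Submodule.span ℂ (⇑hρ.1.1.eigenvectorBasis '' T) with hU
  have hWcard : Module.finrank ℂ W = (i : ℕ) + 1 := by
    rw [hW, dim_span_basis]
    rw [Fintype.card_congr (Equiv.Set.image _ _ eσ.injective).symm]
    simp
  have hUcard : Module.finrank ℂ U = n - (i : ℕ) := by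
    rw [hU, dim_span_basis]
    rw [Fintype.card_congr (Equiv.Set.image _ _ eρ.injective).symm]
    simp
  have hfin : 0 < Module.finrank ℂ ↥(W ⊓ U) := by
    have h1 := Submodule.finrank_sup_add_finrank_inf_eq W U
    have h2 : Module.finrank ℂ ↥(W ⊔ U) ≤ n :=
      le_trans (Submodule.finrank_le _) (le_of_eq finrank_euclideanSpace_fin)
    have h3 : (i : ℕ) < n := i.is_lt
    omega
  obtain ⟨x, hxmem, hx0⟩ : ∃ x ∈ W ⊓ U, x ≠ 0 := by
    rw [← Submodule.ne_bot_iff]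
    intro hbot
    rw [hbot] at hfin
    simp [finrank_bot] at hfin
  have hxW : x ∈ W := hxmem.1
  have hxU : x ∈ U := hxmem.2
  have hxnorm : (0:ℝ) < ‖x‖^2 := by
    have h0 : (0:ℝ) < ‖x‖ := norm_pos_iff.mpr hx0
    positivity
  have hupper : Complex.re (star (x : Fin n → ℂ) ⬝ᵥ ρ *ᵥ (x : Fin n → ℂ))
      ≤ hρ.1.1.eigenvalues (eρ i) * ‖x‖^2 := by
    rw [quadform_re hρ.1.1 x, ← sum_sq_repr hρ.1.1.eigenvectorBasis x, Finset.mul_sum]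
    refine Finset.sum_le_sum fun j _ => ?_
    by_cases hj : j ∈ T
    · obtain ⟨k, hk, rfl⟩ := hj
      exact mul_le_mul_of_nonneg_right (hmρ hk) (by positivity)
    · rw [repr_eq_zero_of_mem_span hρ.1.1.eigenvectorBasis hxU hj]
      simp
  have hlower : hσ.1.1.eigenvalues (eσ i) * ‖x‖^2
      ≤ Complex.re (star (x : Fin n → ℂ) ⬝ᵥ σ *ᵥ (x : Fin n → ℂ)) := by
    rw [quadform_re hσ.1.1 x, ← sum_sq_repr hσ.1.1.eigenvectorBasis x, Finset.mul_sum]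
    refine Finset.sum_le_sum fun j _ => ?_
    by_cases hj : j ∈ S
    · obtain ⟨k, hk, rfl⟩ := hj
      exact mul_le_mul_of_nonneg_right (hmσ hk) (by positivity)
    · rw [repr_eq_zero_of_mem_span hσ.1.1.eigenvectorBasis hxW hj]
      simp
  have hexpand : star (x : Fin n → ℂ) ⬝ᵥ (maxEig σ • ρ - maxEig ρ • σ) *ᵥ (x : Fin n → ℂ)
      = (maxEig σ : ℂ) * (star (x : Fin n → ℂ) ⬝ᵥ ρ *ᵥ (x : Fin n → ℂ))
        - (maxEig ρ : ℂ) * (star (x : Fin n → ℂ) ⬝ᵥ σ *ᵥ (x : Fin n → ℂ)) := by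
    rw [Matrix.sub_mulVec, dotProduct_sub, Matrix.smul_mulVec,
      Matrix.smul_mulVec, dotProduct_smul, dotProduct_smul]
    rw [Complex.real_smul, Complex.real_smul]
  have hkey : (0:ℝ) ≤ maxEig σ * Complex.re (star (x : Fin n → ℂ) ⬝ᵥ ρ *ᵥ (x : Fin n → ℂ))
      - maxEig ρ * Complex.re (star (x : Fin n → ℂ) ⬝ᵥ σ *ᵥ (x : Fin n → ℂ)) := by
    have h0 := h.dotProduct_mulVec_nonneg (x : Fin n → ℂ)
    have h1 := (Complex.le_def.mp h0).1
    rw [hexpand] at h1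
    simpa [Complex.sub_re, Complex.mul_re] using h1
  nlinarith [mul_le_mul_of_nonneg_left hupper hs, mul_le_mul_of_nonneg_left hlower hr,
    mul_pos hxnorm hxnorm]
end

section
/- Let n, m ≥ 2. Let ≤ be a relation on the density matrices of M_{nm}(ℂ) (indexed by pairs in Fin n × Fin m) such that every density matrix ρ is ≤-below the pure state v v† for every unit eigenvector v of ρ with eigenvalue ρ⁺. Let ≤′ be a partial order on the density matrices of M_n(ℂ) with the completely mixed state ⊥ₙ = (1/n)•Iₙ as least element. Then the partial trace over the second system, (tr₂ A)(i,j) = ∑ₖ A((i,k),(j,k)), is not monotone: there exist density matrices ρ, σ on M_{nm}(ℂ) with ρ ≤ σ but not tr₂(ρ) ≤′ tr₂(σ). -/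
open Matrix
open scoped ComplexOrder

section Helpers

set_option linter.unusedSectionVars false
set_option maxHeartbeats 1000000

variable {ι : Type*} [Fintype ι] [DecidableEq ι]

lemma vmv_mulVec (w u x : ι → ℂ) : (vecMulVec w u) *ᵥ x = (u ⬝ᵥ x) • w := by
  ext i
  simp [mulVec, vecMulVec, dotProduct, Finset.mul_sum, mul_assoc, mul_comm, mul_left_comm]

lemma star_dot_comm (w x : ι → ℂ) : star x ⬝ᵥ w = star (star w ⬝ᵥ x) := by
  simp [dotProduct, mul_comm]

lemma psd_vmv (w : ι → ℂ) : (vecMulVec w (star w)).PosSemidef := by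
  refine posSemidef_iff_dotProduct_mulVec.mpr ⟨?_, ?_⟩
  · ext i j
    simp [vecMulVec_apply, conjTranspose_apply, mul_comm]
  · intro x
    rw [vmv_mulVec, dotProduct_smul, smul_eq_mul, star_dot_comm]
    exact star_mul_self_nonneg (star x ⬝ᵥ w)

lemma psd_real_smul {c : ℝ} (hc : 0 ≤ c) {A : Matrix ι ι ℂ} (hA : A.PosSemidef) :
    ((c : ℂ) • A).PosSemidef := by
  refine posSemidef_iff_dotProduct_mulVec.mpr ⟨?_, ?_⟩
  · rw [IsHermitian, conjTranspose_smul, hA.1.eq]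
    congr 1
    simp [Complex.star_def, Complex.conj_ofReal]
  · intro x
    rw [smul_mulVec, dotProduct_smul, smul_eq_mul]
    exact mul_nonneg (by exact_mod_cast hc) (hA.dotProduct_mulVec_nonneg x)

lemma dot_star_self_real (w : ι → ℂ) :
    star w ⬝ᵥ w = ((∑ i, Complex.normSq (w i) : ℝ) : ℂ) := by
  push_cast
  simp [dotProduct, Complex.normSq_eq_conj_mul_self]

lemma le_of_psd_sub {A : Matrix ι ι ℂ} {c : ℝ}
    (h : ((c : ℂ) • (1 : Matrix ι ι ℂ) - A).PosSemidef) {a : ℝ} {w : ι → ℂ}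
    (hw : w ≠ 0) (hew : A *ᵥ w = (a : ℂ) • w) : a ≤ c := by
  have h2 := h.dotProduct_mulVec_nonneg w
  rw [sub_mulVec, smul_mulVec, one_mulVec, hew, ← sub_smul, dotProduct_smul,
    smul_eq_mul, dot_star_self_real] at h2
  set s : ℝ := ∑ i, Complex.normSq (w i) with hs
  have hspos : 0 < s := by
    have : ∃ i, w i ≠ 0 := by
      by_contra hcon
      push_neg at hcon
      exact hw (funext hcon)
    obtain ⟨i, hi⟩ := this
    have : 0 < Complex.normSq (w i) := Complex.normSq_pos.mpr hi
    exact lt_of_lt_of_le this (Finset.single_le_sum (f := fun i => Complex.normSq (w i))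
      (fun j _ => Complex.normSq_nonneg _) (Finset.mem_univ i))
  have : (0:ℂ) ≤ ((c - a) * s : ℝ) := by exact_mod_cast h2
  have h3 : (0:ℝ) ≤ (c - a) * s := by exact_mod_cast this
  nlinarith

lemma maxEig_eq {A : Matrix ι ι ℂ} {c : ℝ} {v : ι → ℂ} (hv : v ≠ 0)
    (hev : A *ᵥ v = (c : ℂ) • v)
    (hub : ∀ a : ℝ, ∀ w : ι → ℂ, w ≠ 0 → A *ᵥ w = (a : ℂ) • w → a ≤ c) :
    maxEig A = c :=
  IsGreatest.csSup_eq ⟨⟨v, hv, hev⟩, fun a ⟨w, hw, he⟩ => hub a w hw he⟩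

noncomputable def wv (a b : ι) (c0 c1 : ℝ) : ι → ℂ :=
  fun p => (if p = a then (c0 : ℂ) else 0) + (if p = b then (c1 : ℂ) else 0)

def ind (a : ι) : ι → ℂ := fun p => if p = a then 1 else 0

noncomputable def redM {n : ℕ} (i0 i1 : Fin n) (a b : ℝ) : Matrix (Fin n) (Fin n) ℂ :=
  diagonal (fun i => if i = i0 then (a : ℂ) else if i = i1 then (b : ℂ) else 0)

lemma one_eq (a b c d : ι) (hab : a ≠ b) (hac : a ≠ c) (had : a ≠ d) (hbc : b ≠ c)
    (hbd : b ≠ d) (hcd : c ≠ d) (c0 c1 : ℝ) (h : c0 ^ 2 + c1 ^ 2 = 1) :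
    (1 : Matrix ι ι ℂ) =
      vecMulVec (wv a b c0 c1) (star (wv a b c0 c1)) +
      vecMulVec (wv a b c1 (-c0)) (star (wv a b c1 (-c0))) +
      vecMulVec (ind c) (star (ind c)) + vecMulVec (ind d) (star (ind d)) +
      diagonal (fun p => if p = a ∨ p = b ∨ p = c ∨ p = d then 0 else 1) := by
  ext p q
  have h' : (c0:ℂ)^2 + (c1:ℂ)^2 = 1 := by exact_mod_cast h
  simp only [vecMulVec_apply, one_apply, Matrix.add_apply, diagonal_apply, Pi.star_apply,
    RCLike.star_def, map_add, apply_ite (starRingEnd ℂ), map_zero, map_neg,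
    Complex.conj_ofReal, wv, ind, _root_.map_one]
  by_cases hpa : p = a <;> by_cases hpb : p = b <;> by_cases hpc : p = c <;>
    by_cases hpd : p = d <;> by_cases hqa : q = a <;> by_cases hqb : q = b <;>
    by_cases hqc : q = c <;> by_cases hqd : q = d <;>
    simp_all <;>
    first
      | (intro hh; simp_all)
      | rfl
      | linear_combination h'
      | linear_combination -h'
      | linear_combination (-2:ℂ) * h'
      | linear_combination (2:ℂ) * h'
      | ring_nf

lemma dot_wv (a b : ι) (hab : a ≠ b) (c0 c1 d0 d1 : ℝ) :
    star (wv a b c0 c1) ⬝ᵥ (wv a b d0 d1) = ((c0 * d0 + c1 * d1 : ℝ) : ℂ) := by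
  simp [dotProduct, wv, mul_add, add_mul, Finset.sum_add_distrib, apply_ite (starRingEnd ℂ),
    Complex.conj_ofReal, ite_mul, mul_ite, Finset.sum_ite_eq', hab, Ne.symm hab] <;>
  push_cast <;> ring

lemma dot_ind_wv (c a b : ι) (hca : c ≠ a) (hcb : c ≠ b) (c0 c1 : ℝ) :
    star (ind c) ⬝ᵥ (wv a b c0 c1) = 0 := by
  simp [dotProduct, ind, wv, mul_add, Finset.sum_add_distrib, apply_ite (starRingEnd ℂ),
    ite_mul, mul_ite, Finset.sum_ite_eq', hca, hcb, Ne.symm hca, Ne.symm hcb]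

lemma trace_vmv (w : ι → ℂ) : (vecMulVec w (star w)).trace = star w ⬝ᵥ w := by
  simp [trace, diag, vecMulVec, dotProduct, mul_comm]

lemma wv_ne_zero (a b : ι) (hab : a ≠ b) {c0 c1 : ℝ} (hc0 : c0 ≠ 0) : wv a b c0 c1 ≠ 0 := by
  intro h
  have := congrFun h a
  simp [wv, hab, Ne.symm hab] at this
  exact hc0 (by exact_mod_cast this)

lemma tr2_vmv {n m : ℕ} (i0 i1 : Fin n) (k0 k1 : Fin m) (hi : i0 ≠ i1) (hk : k0 ≠ k1)
    (c0 c1 : ℝ) :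
    (Matrix.of fun i j => ∑ k, (vecMulVec (wv (i0,k0) (i1,k1) c0 c1)
        (star (wv (i0,k0) (i1,k1) c0 c1))) (i,k) (j,k)) = redM i0 i1 (c0^2) (c1^2) := by
  ext i j
  simp only [of_apply, vecMulVec_apply, Pi.star_apply, wv, redM, diagonal_apply,
    Prod.mk.injEq, map_add, apply_ite (starRingEnd ℂ), map_zero, Complex.conj_ofReal]
  by_cases hi0 : i = i0 <;> by_cases hi1 : i = i1 <;> by_cases hj0 : j = i0 <;>
    by_cases hj1 : j = i1 <;>
    simp_all [ite_and, mul_add, add_mul, ite_mul, mul_ite, Finset.sum_add_distrib,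
      Finset.sum_ite_eq', hk, Ne.symm hk, eq_comm] <;> push_cast <;> ring

lemma tr2_P {n m : ℕ} (i0 i1 : Fin n) (k : Fin m) (hi : i0 ≠ i1) :
    (Matrix.of fun i j => ∑ l, (vecMulVec (ind ((i0 : Fin n), k)) (star (ind (i0, k)))) (i,l) (j,l))
      = redM i0 i1 1 0 := by
  ext i j
  simp only [of_apply, vecMulVec_apply, Pi.star_apply, ind, redM, diagonal_apply,
    Prod.mk.injEq, apply_ite (starRingEnd ℂ), map_zero, _root_.map_one]
  by_cases hi0 : i = i0 <;> by_cases hj0 : j = i0 <;>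
    simp_all [ite_and, ite_mul, mul_ite, Finset.sum_ite_eq', hi, Ne.symm hi, eq_comm]

lemma tr2_P' {n m : ℕ} (i0 i1 : Fin n) (k : Fin m) (hi : i0 ≠ i1) :
    (Matrix.of fun i j => ∑ l, (vecMulVec (ind ((i1 : Fin n), k)) (star (ind (i1, k)))) (i,l) (j,l))
      = redM i0 i1 0 1 := by
  ext i j
  simp only [of_apply, vecMulVec_apply, Pi.star_apply, ind, redM, diagonal_apply,
    Prod.mk.injEq, apply_ite (starRingEnd ℂ), map_zero, _root_.map_one]
  by_cases hi0 : i = i0 <;> by_cases hi1 : i = i1 <;> by_cases hj0 : j = i0 <;>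
    by_cases hj1 : j = i1 <;>
    simp_all [ite_and, ite_mul, mul_ite, Finset.sum_ite_eq', hi, Ne.symm hi, eq_comm]

lemma redM_smul {n : ℕ} (i0 i1 : Fin n) (c a b : ℝ) :
    (c : ℂ) • redM i0 i1 a b = redM i0 i1 (c*a) (c*b) := by
  ext i j
  simp only [redM, Matrix.smul_apply, diagonal_apply, smul_eq_mul]
  split_ifs <;> push_cast <;> ring

lemma redM_add {n : ℕ} (i0 i1 : Fin n) (a b a' b' : ℝ) :
    redM i0 i1 a b + redM i0 i1 a' b' = redM i0 i1 (a+a') (b+b') := by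
  ext i j
  simp only [redM, Matrix.add_apply, diagonal_apply]
  split_ifs <;> push_cast <;> ring

lemma redM_density {n : ℕ} (i0 i1 : Fin n) (hi : i0 ≠ i1) {a b : ℝ} (ha : 0 ≤ a) (hb : 0 ≤ b)
    (hab : a + b = 1) : IsDensity (redM i0 i1 a b) := by
  constructor
  · refine PosSemidef.diagonal ?_
    intro i
    dsimp
    split_ifs <;> simp [Complex.zero_le_real, ha, hb, le_refl]
  · rw [redM, trace_diagonal]
    have : ∀ i : Fin n, (if i = i0 then (a:ℂ) else if i = i1 then (b:ℂ) else 0)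
        = (if i = i0 then (a:ℂ) else 0) + (if i = i1 then (b:ℂ) else 0) := by
      intro i
      split_ifs with h1 h2 <;> simp_all [Ne.symm]
    simp only [this, Finset.sum_add_distrib, Finset.sum_ite_eq', Finset.mem_univ, if_true]
    rw [← Complex.ofReal_add, hab, Complex.ofReal_one]

end Helpers
section Key

set_option maxHeartbeats 1000000

lemma key {n m : ℕ} (i0 i1 : Fin n) (k0 k1 : Fin m) (hi : i0 ≠ i1) (hk : k0 ≠ k1)
    (s0 s1 μ ν : ℝ) (hs0 : 0 < s0) (hs1 : 0 < s1) (hs : s0 + s1 = 1)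
    (hμ0 : 0 ≤ μ) (hμ : μ ≤ 1/2) (hν0 : 0 ≤ ν) (hν : ν ≤ 1/2) (hμν : μ + ν = 1/2) :
    ∃ (ρ : Matrix (Fin n × Fin m) (Fin n × Fin m) ℂ) (v : Fin n × Fin m → ℂ), IsDensity ρ ∧ IsDensity (vecMulVec v (star v)) ∧ (star v ⬝ᵥ v = (1:ℂ)) ∧
      ρ *ᵥ v = ((maxEig ρ : ℝ) : ℂ) • v ∧
      (Matrix.of fun i j => ∑ k, ρ (i,k) (j,k)) = redM i0 i1 (s0/2 + μ) (s1/2 + ν) ∧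
      (Matrix.of fun i j => ∑ k, (vecMulVec v (star v)) (i,k) (j,k)) = redM i0 i1 s0 s1 := by
  set q00 : Fin n × Fin m := (i0, k0) with hq00
  set q11 : Fin n × Fin m := (i1, k1) with hq11
  set q01 : Fin n × Fin m := (i0, k1) with hq01
  set q10 : Fin n × Fin m := (i1, k0) with hq10
  have d1 : q00 ≠ q11 := fun h => hi (congrArg Prod.fst h)
  have d2 : q00 ≠ q01 := fun h => hk (congrArg Prod.snd h)
  have d3 : q00 ≠ q10 := fun h => hi (congrArg Prod.fst h)
  have d4 : q11 ≠ q01 := fun h => hi (congrArg Prod.fst h).symm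
  have d5 : q11 ≠ q10 := fun h => hk (congrArg Prod.snd h).symm
  have d6 : q01 ≠ q10 := fun h => hi (congrArg Prod.fst h)
  set c0 : ℝ := Real.sqrt s0 with hc0
  set c1 : ℝ := Real.sqrt s1 with hc1
  have hc0pos : 0 < c0 := Real.sqrt_pos.mpr hs0
  have hc1pos : 0 < c1 := Real.sqrt_pos.mpr hs1
  have hc0sq : c0 ^ 2 = s0 := Real.sq_sqrt hs0.le
  have hc1sq : c1 ^ 2 = s1 := Real.sq_sqrt hs1.le
  have hcsq : c0 ^ 2 + c1 ^ 2 = 1 := by rw [hc0sq, hc1sq]; exact hs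
  set v : Fin n × Fin m → ℂ := wv q00 q11 c0 c1 with hv
  set ρ : Matrix (Fin n × Fin m) (Fin n × Fin m) ℂ :=
    ((1/2 : ℝ) : ℂ) • vecMulVec v (star v) +
    ((μ : ℝ) : ℂ) • vecMulVec (ind q01) (star (ind q01)) +
    ((ν : ℝ) : ℂ) • vecMulVec (ind q10) (star (ind q10)) with hρ
  have hvunit : star v ⬝ᵥ v = (1:ℂ) := by
    rw [hv, dot_wv _ _ d1]
    norm_cast
    nlinarith
  have hvne : v ≠ 0 := wv_ne_zero _ _ d1 hc0pos.ne'
  -- eigenvector equation with eigenvalue 1/2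
  have heig : ρ *ᵥ v = ((1/2 : ℝ) : ℂ) • v := by
    rw [hρ, add_mulVec, add_mulVec, smul_mulVec, smul_mulVec, smul_mulVec,
      vmv_mulVec, vmv_mulVec, vmv_mulVec, hvunit,
      hv, dot_ind_wv _ _ _ d2.symm d4.symm, dot_ind_wv _ _ _ d3.symm d5.symm]
    simp
  -- the PSD decomposition of (1/2)•1 - ρ
  have hdec : (((1/2 : ℝ) : ℂ) • (1 : Matrix (Fin n × Fin m) (Fin n × Fin m) ℂ) - ρ).PosSemidef := by
    have hone := one_eq q00 q11 q01 q10 d1 d2 d3 d4 d5 d6 c0 c1 hcsq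
    have heq : ((1/2 : ℝ) : ℂ) • (1 : Matrix (Fin n × Fin m) (Fin n × Fin m) ℂ) - ρ =
        ((1/2 : ℝ) : ℂ) • vecMulVec (wv q00 q11 c1 (-c0)) (star (wv q00 q11 c1 (-c0))) +
        (((1/2 - μ : ℝ)) : ℂ) • vecMulVec (ind q01) (star (ind q01)) +
        (((1/2 - ν : ℝ)) : ℂ) • vecMulVec (ind q10) (star (ind q10)) +
        ((1/2 : ℝ) : ℂ) • diagonal (fun p => if p = q00 ∨ p = q11 ∨ p = q01 ∨ p = q10 then 0 else 1) := by
      rw [hρ, hv]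
      nth_rewrite 1 [hone]
      push_cast
      module
    rw [heq]
    have hD : (diagonal (fun p : Fin n × Fin m =>
        if p = q00 ∨ p = q11 ∨ p = q01 ∨ p = q10 then (0:ℂ) else 1)).PosSemidef := by
      refine PosSemidef.diagonal ?_
      intro p
      dsimp
      split_ifs <;> simp
    exact (((psd_real_smul (by norm_num) (psd_vmv _)).add
      (psd_real_smul (by linarith) (psd_vmv _))).add
      (psd_real_smul (by linarith) (psd_vmv _))).add
      (psd_real_smul (by norm_num) hD)
  have hmax : maxEig ρ = 1/2 := by
    refine maxEig_eq hvne heig ?_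
    intro a w hw hew
    exact le_of_psd_sub hdec hw hew
  refine ⟨ρ, v, ?_, ?_, hvunit, ?_, ?_, ?_⟩
  · constructor
    · exact ((psd_real_smul (by norm_num) (psd_vmv _)).add
        (psd_real_smul hμ0 (psd_vmv _))).add (psd_real_smul hν0 (psd_vmv _))
    · rw [hρ]
      simp only [trace_add, trace_smul, trace_vmv, hvunit]
      rw [show star (ind q01) ⬝ᵥ ind q01 = (1:ℂ) by
          simp [ind, dotProduct, apply_ite (starRingEnd ℂ), Finset.sum_ite_eq'],
        show star (ind q10) ⬝ᵥ ind q10 = (1:ℂ) by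
          simp [ind, dotProduct, apply_ite (starRingEnd ℂ), Finset.sum_ite_eq']]
      have hμνC : (μ:ℂ) + (ν:ℂ) = 1/2 := by rw [← Complex.ofReal_add, hμν]; norm_num
      simp only [smul_eq_mul, mul_one]
      push_cast
      linear_combination hμνC
  · constructor
    · exact psd_vmv v
    · rw [trace_vmv, hvunit]
  · rw [hmax]; exact heig
  · -- partial trace of ρ
    have expand : (Matrix.of fun i j => ∑ k, ρ (i,k) (j,k)) =
        ((1/2 : ℝ) : ℂ) • (Matrix.of fun i j => ∑ k, (vecMulVec v (star v)) (i,k) (j,k)) +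
        ((μ : ℝ) : ℂ) • (Matrix.of fun i j => ∑ k, (vecMulVec (ind q01) (star (ind q01))) (i,k) (j,k)) +
        ((ν : ℝ) : ℂ) • (Matrix.of fun i j => ∑ k, (vecMulVec (ind q10) (star (ind q10))) (i,k) (j,k)) := by
      ext i j
      simp [hρ, Finset.sum_add_distrib, Finset.mul_sum]
    rw [expand, hv, tr2_vmv i0 i1 k0 k1 hi hk, hq01, tr2_P i0 i1 k1 hi, hq10, tr2_P' i0 i1 k0 hi,
      redM_smul, redM_smul, redM_smul, redM_add, redM_add]
    rw [hc0sq, hc1sq, show (1/2*s0+μ*1+ν*0 : ℝ) = s0/2+μ from by ring,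
      show (1/2*s1+μ*0+ν*1 : ℝ) = s1/2+ν from by ring]
  · rw [hv, tr2_vmv i0 i1 k0 k1 hi hk, hc0sq, hc1sq]

end Key
theorem stmt14 {n m : ℕ} (hn : 2 ≤ n) (hm : 2 ≤ m)
    (le : Matrix (Fin n × Fin m) (Fin n × Fin m) ℂ →
      Matrix (Fin n × Fin m) (Fin n × Fin m) ℂ → Prop)
    (hle : ∀ ρ, IsDensity ρ → ∀ v : Fin n × Fin m → ℂ, star v ⬝ᵥ v = 1 →
      ρ.mulVec v = (maxEig ρ : ℂ) • v → le ρ (vecMulVec v (star v)))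
    (le' : Matrix (Fin n) (Fin n) ℂ → Matrix (Fin n) (Fin n) ℂ → Prop)
    (hrefl : ∀ ρ, IsDensity ρ → le' ρ ρ)
    (htrans : ∀ ρ σ τ, IsDensity ρ → IsDensity σ → IsDensity τ →
      le' ρ σ → le' σ τ → le' ρ τ)
    (hantisymm : ∀ ρ σ, IsDensity ρ → IsDensity σ → le' ρ σ → le' σ ρ → ρ = σ)
    (hbot : ∀ ρ, IsDensity ρ → le' ((n : ℝ)⁻¹ • (1 : Matrix (Fin n) (Fin n) ℂ)) ρ) :
    ∃ ρ σ : Matrix (Fin n × Fin m) (Fin n × Fin m) ℂ, IsDensity ρ ∧ IsDensity σ ∧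
      le ρ σ ∧
      ¬ le' (Matrix.of fun i j => ∑ k, ρ (i, k) (j, k))
            (Matrix.of fun i j => ∑ k, σ (i, k) (j, k)) := by
  let i0 : Fin n := ⟨0, by omega⟩
  let i1 : Fin n := ⟨1, by omega⟩
  let k0 : Fin m := ⟨0, by omega⟩
  let k1 : Fin m := ⟨1, by omega⟩
  have hi : i0 ≠ i1 := by simp [i0, i1, Fin.ext_iff]
  have hk : k0 ≠ k1 := by simp [k0, k1, Fin.ext_iff]
  set A : Matrix (Fin n) (Fin n) ℂ := redM i0 i1 (1/2) (1/2) with hAdef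
  set B : Matrix (Fin n) (Fin n) ℂ := redM i0 i1 (1/3) (2/3) with hBdef
  have hA : IsDensity A := redM_density i0 i1 hi (by norm_num) (by norm_num) (by norm_num)
  have hB : IsDensity B := redM_density i0 i1 hi (by norm_num) (by norm_num) (by norm_num)
  have hAB : A ≠ B := by
    intro h
    have h2 : A i0 i0 = B i0 i0 := by rw [h]
    simp only [hAdef, hBdef, redM, diagonal_apply, if_pos rfl] at h2
    norm_num at h2
  obtain ⟨ρ₁, v₁, hρ₁d, hσ₁d, hv₁u, hv₁e, htr₁, hts₁⟩ :=
    key i0 i1 k0 k1 hi hk (1/3) (2/3) (1/3) (1/6) (by norm_num) (by norm_num) (by norm_num)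
      (by norm_num) (by norm_num) (by norm_num) (by norm_num) (by norm_num)
  obtain ⟨ρ₂, v₂, hρ₂d, hσ₂d, hv₂u, hv₂e, htr₂, hts₂⟩ :=
    key i0 i1 k0 k1 hi hk (1/2) (1/2) (1/12) (5/12) (by norm_num) (by norm_num) (by norm_num)
      (by norm_num) (by norm_num) (by norm_num) (by norm_num) (by norm_num)
  rw [show ((1:ℝ)/3/2 + 1/3 : ℝ) = 1/2 from by norm_num,
    show ((2:ℝ)/3/2 + 1/6 : ℝ) = 1/2 from by norm_num] at htr₁
  rw [show ((1:ℝ)/2/2 + 1/12 : ℝ) = 1/3 from by norm_num,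
    show ((1:ℝ)/2/2 + 5/12 : ℝ) = 2/3 from by norm_num] at htr₂
  by_cases hc : le' A B
  · refine ⟨ρ₂, vecMulVec v₂ (star v₂), hρ₂d, hσ₂d, hle ρ₂ hρ₂d v₂ hv₂u hv₂e, ?_⟩
    rw [htr₂, hts₂]
    intro hba
    exact hAB (hantisymm A B hA hB hc hba)
  · refine ⟨ρ₁, vecMulVec v₁ (star v₁), hρ₁d, hσ₁d, hle ρ₁ hρ₁d v₁ hv₁u hv₁e, ?_⟩
    rw [htr₁, hts₁]
    exact hc
end
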